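/- arXiv:1801.07197 — 2 statements merged into one kernel-verified Lean document; each statement's English description precedes it below -/
import Mathlib

section
/- Let Γ be a finitely generated residually finite group and let k be a positive integer. Suppose there exist a finite index subgroup Δ of Γ and elements g_1, …, g_k ∈ Γ such that the left-normed commutator [a_1, …, a_k] equals 1 for all a_1 ∈ g_1Δ, …, a_k ∈ g_kΔ. Then there exists a finite index subgroup Δ_0 of Γ with γ_k(Δ_0) = 1. -/
open scoped Classical

/-- The commutator `[x, y] = x⁻¹y⁻¹xy` (the convention used in the paper). -/
def pcomm {G : Type*} [Group G] (x y : G) : G := x⁻¹ * y⁻¹ * x * y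

/-- The left-normed commutator word `w_k = [x₁, …, x_k] ∈ F_k`,
defined inductively by `w₁ = x₁` and `w_{j+1} = [w_j, x_{j+1}]`. -/
def commWord : (k : ℕ) → FreeGroup (Fin k)
  | 0 => 1
  | 1 => FreeGroup.of 0
  | (k + 2) =>
      pcomm (FreeGroup.map Fin.castSucc (commWord (k + 1))) (FreeGroup.of (Fin.last (k + 1)))

/-- The left-normed commutator `[g₁, …, g_k]` of group elements. -/
def commElt {G : Type*} [Group G] : {k : ℕ} → (Fin k → G) → G
  | 0, _ => 1
  | 1, f => f 0
  | (_ + 2), f => pcomm (commElt (fun i => f i.castSucc)) (f (Fin.last _))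

/-- The word `[x₁², x₂, …, x_k] ∈ F_k`, defined inductively by
`u₁ = x₁²` and `u_{j+1} = [u_j, x_{j+1}]`. -/
def sqCommWord : (k : ℕ) → FreeGroup (Fin k)
  | 0 => 1
  | 1 => FreeGroup.of 0 ^ 2
  | (k + 2) =>
      pcomm (FreeGroup.map Fin.castSucc (sqCommWord (k + 1))) (FreeGroup.of (Fin.last (k + 1)))

/-- `P_{G,w}(g) = |w_G⁻¹(g)| / |G|^k`, the probability that the word map of `w`
takes the value `g` on a uniformly random `k`-tuple. -/
noncomputable def wordProb {k : ℕ} {G : Type*} [Group G] (w : FreeGroup (Fin k)) (g : G) : ℝ :=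
  (Nat.card {f : Fin k → G // FreeGroup.lift f w = g} : ℝ) / (Nat.card G : ℝ) ^ k

/-- A group is residually finite if every nontrivial element is excluded by
some normal subgroup of finite index. -/
def ResiduallyFinite (Γ : Type*) [Group Γ] : Prop :=
  ∀ g : Γ, g ≠ 1 → ∃ Δ : Subgroup Γ, Δ.Normal ∧ Δ.FiniteIndex ∧ g ∉ Δ

/-- A word `w ≠ 1` is a probabilistic identity of `Γ` if for some `ε > 0` every
finite quotient `H` of `Γ` satisfies `P_{H,w}(1) ≥ ε`. -/
def IsProbIdentity {k : ℕ} (Γ : Type*) [Group Γ] (w : FreeGroup (Fin k)) : Prop :=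
  w ≠ 1 ∧ ∃ ε : ℝ, 0 < ε ∧
    ∀ (Δ : Subgroup Γ) [Δ.Normal], Δ.FiniteIndex → ε ≤ wordProb w (1 : Γ ⧸ Δ)

/-- `G(H)`: the intersection of the kernels of all homomorphisms from `G` to `H`. -/
def kerInt (G H : Type*) [Group G] [Group H] : Subgroup G := ⨅ φ : G →* H, φ.ker

/-- A word `1 ≠ w ∈ F_k` is good if for every `ε > 0` there is a word `1 ≠ v ∈ F_m`,
depending only on `w` and `ε`, which is an identity of every finite group `G`
satisfying `P_{G,w}(g) ≥ ε` for some `g ∈ G`. -/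
def IsGood {k : ℕ} (w : FreeGroup (Fin k)) : Prop :=
  w ≠ 1 ∧ ∀ ε : ℝ, 0 < ε → ∃ (m : ℕ) (v : FreeGroup (Fin m)), v ≠ 1 ∧
    ∀ (G : Type) [Group G] [Finite G],
      (∃ g : G, ε ≤ wordProb w g) → ∀ f : Fin m → G, FreeGroup.lift f v = 1

/-!
Pass to the normal core `N` of `Δ`; the coset identity still holds for the cosets `gᵢN`. Then it
holds on `N` itself, by induction on `k`: if `[a₁, …, a_k, gn] = 1` for all `n ∈ N`, the
commutator `[a₁, …, a_k]` commutes with `g` and with every `gn`, hence centralizes `N`, so modulo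
the centralizer `C_Γ(N)`, which is normal, we have a coset identity of length `k` for the image
of `N`. Finally, an identity `[x₁, …, x_k] = 1` on `N` puts every element of `N` into the
`(k-1)`-st term of the upper central series, i.e. `γ_k(N) = 1`.
-/

section CommElt

open scoped commutatorElement

variable {G : Type*} [Group G]

theorem pcomm_eq_one_iff {x y : G} : pcomm x y = 1 ↔ Commute x y := by
  rw [pcomm, mul_assoc, mul_assoc, inv_mul_eq_one, eq_inv_mul_iff_mul_eq, eq_comm]
  rfl

theorem commElt_snoc {k : ℕ} (a : Fin (k + 1) → G) (x : G) :
    commElt (Fin.snoc a x : Fin (k + 2) → G) = pcomm (commElt a) x := by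
  simp only [commElt, Fin.snoc_castSucc, Fin.snoc_last]

theorem map_commElt {H : Type*} [Group H] (φ : G →* H) :
    ∀ {k : ℕ} (f : Fin k → G), φ (commElt f) = commElt (fun i => φ (f i))
  | 0, _ => map_one φ
  | 1, _ => rfl
  | _ + 2, f => by
    simp only [commElt, pcomm, map_mul, map_inv, map_commElt φ (fun i => f i.castSucc)]

theorem commElt_mem_upperCentralSeries_succ {n j : ℕ}
    (h : ∀ f : Fin (n + 2) → G, commElt f ∈ Subgroup.upperCentralSeries G j) (f : Fin (n + 1) → G) :
    commElt f ∈ Subgroup.upperCentralSeries G (j + 1) := by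
  rw [Subgroup.mem_upperCentralSeries_succ_iff]
  intro y
  have hy : pcomm (commElt f) y⁻¹ ∈ Subgroup.upperCentralSeries G j := commElt_snoc f y⁻¹ ▸ h _
  have hconj : ⁅commElt f, y⁆ = commElt f * (pcomm (commElt f) y⁻¹)⁻¹ * (commElt f)⁻¹ := by
    rw [commutatorElement_def, pcomm]; group
  rw [hconj]
  exact Subgroup.Normal.conj_mem inferInstance _ (inv_mem hy) _

theorem commElt_mem_upperCentralSeries {j : ℕ} :
    ∀ {n : ℕ}, (∀ f : Fin (j + n + 1) → G, commElt f = 1) →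
      ∀ f : Fin (n + 1) → G, commElt f ∈ Subgroup.upperCentralSeries G j := by
  induction j with
  | zero => intro n h f; rw [Nat.zero_add] at h; simpa using h f
  | succ j ih =>
    intro n h
    rw [Nat.add_right_comm j 1 n] at h
    exact commElt_mem_upperCentralSeries_succ (ih h)

theorem lowerCentralSeries_eq_bot_of_commElt_eq_one {m : ℕ}
    (h : ∀ f : Fin (m + 1) → G, commElt f = 1) :
    Subgroup.lowerCentralSeries (⊤ : Subgroup G) m = ⊥ := by
  rw [Subgroup.lowerCentralSeries_eq_bot_iff_upperCentralSeries_eq_top, eq_top_iff]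
  exact fun x _ => commElt_mem_upperCentralSeries (n := 0) h fun _ => x

end CommElt

theorem commElt_mem_centralizer_of_forall_cosets {G : Type*} [Group G] {N : Subgroup G} {k : ℕ}
    (g : Fin (k + 2) → G)
    (hg : ∀ a : Fin (k + 2) → G, (∀ i, (g i)⁻¹ * a i ∈ N) → commElt a = 1)
    (a : Fin (k + 1) → G) (ha : ∀ i, (g i.castSucc)⁻¹ * a i ∈ N) :
    commElt a ∈ Subgroup.centralizer (N : Set G) := by
  let c := g (Fin.last (k + 1))
  have hcomm : ∀ n ∈ N, Commute (commElt a) (c * n) := by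
    intro n hn
    rw [← pcomm_eq_one_iff, ← commElt_snoc]
    refine hg _ (Fin.lastCases ?_ fun i => ?_)
    · simpa [c] using hn
    · simpa using ha i
  refine Subgroup.mem_centralizer_iff.mpr fun n hn => (Commute.eq ?_).symm
  -- `n = c⁻¹ * (c * n)`
  simpa using (hcomm 1 N.one_mem).inv_right.mul_right (hcomm n hn)

theorem commElt_eq_one_of_forall_cosets {G : Type*} [Group G] {N : Subgroup G} [N.Normal] :
    ∀ {k : ℕ} (g : Fin k → G), (∀ a : Fin k → G, (∀ i, (g i)⁻¹ * a i ∈ N) → commElt a = 1) →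
      ∀ b : Fin k → G, (∀ i, b i ∈ N) → commElt b = 1
  | 0, _, _, _, _ => rfl
  | 1, g, hg, b, hb => by
    have hg₀ : g 0 = 1 := hg g fun _ => by simp
    simpa [commElt, hg₀] using hg (fun _ => g 0 * b 0) fun i => by
      simp [Fin.fin_one_eq_zero i, hb 0]
  | k + 2, g, hg, b, hb => by
    let C := Subgroup.centralizer (N : Set G)
    let π := QuotientGroup.mk' C
    have : (N.map π).Normal := Subgroup.Normal.map inferInstance π (QuotientGroup.mk'_surjective C)
    have hquot : ∀ a : Fin (k + 1) → G ⧸ C,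
        (∀ i, (π (g i.castSucc))⁻¹ * a i ∈ N.map π) → commElt a = 1 := by
      intro a ha
      choose n hnN hn using fun i => Subgroup.mem_map.mp (ha i)
      have ha' : a = fun i => π (g i.castSucc * n i) := by
        funext i
        rw [map_mul, hn i, mul_inv_cancel_left]
      rw [ha', ← map_commElt, ← MonoidHom.mem_ker, QuotientGroup.ker_mk']
      exact commElt_mem_centralizer_of_forall_cosets g hg _ fun i => by simpa using hnN i
    have hinit : commElt (fun i : Fin (k + 1) => b i.castSucc) ∈ C := by
      rw [← QuotientGroup.ker_mk' C, MonoidHom.mem_ker, map_commElt]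
      exact commElt_eq_one_of_forall_cosets _ hquot _
        fun i => Subgroup.mem_map_of_mem π (hb i.castSucc)
    show pcomm _ _ = 1
    exact pcomm_eq_one_iff.mpr (Subgroup.mem_centralizer_iff.mp hinit _ (hb _)).symm

theorem stmt2_general (Γ : Type*) [Group Γ]
    (k : ℕ) (hk : 1 ≤ k)
    (h : ∃ Δ : Subgroup Γ, Δ.FiniteIndex ∧ ∃ g : Fin k → Γ,
      ∀ a : Fin k → Γ, (∀ i, (g i)⁻¹ * a i ∈ Δ) → commElt a = 1) :
    ∃ Δ₀ : Subgroup Γ, Δ₀.FiniteIndex ∧ Subgroup.lowerCentralSeries (⊤ : Subgroup ↥Δ₀) (k - 1) = ⊥ := by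
  obtain ⟨Δ, hΔ, g, hg⟩ := h
  refine ⟨Δ.normalCore, inferInstance, ?_⟩
  obtain ⟨m, rfl⟩ : ∃ m, k = m + 1 := ⟨k - 1, by omega⟩
  refine lowerCentralSeries_eq_bot_of_commElt_eq_one fun f => Subtype.val_injective ?_
  rw [← Subgroup.coe_subtype, map_commElt]
  exact commElt_eq_one_of_forall_cosets g (fun a ha => hg a fun i => Δ.normalCore_le (ha i)) _
    fun i => (f i).2

/-- A coset identity `[g₁Δ, …, g_kΔ] = 1` with `Δ` of finite index in
a finitely generated residually finite group `Γ` forces a finite index subgroup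
`Δ₀` with `γ_k(Δ₀) = 1`. -/
theorem stmt2 (Γ : Type*) [Group Γ] (hfg : Group.FG Γ) (hrf : ResiduallyFinite Γ)
    (k : ℕ) (hk : 1 ≤ k)
    (h : ∃ Δ : Subgroup Γ, Δ.FiniteIndex ∧ ∃ g : Fin k → Γ,
      ∀ a : Fin k → Γ, (∀ i, (g i)⁻¹ * a i ∈ Δ) → commElt a = 1) :
    ∃ Δ₀ : Subgroup Γ, Δ₀.FiniteIndex ∧ Subgroup.lowerCentralSeries (⊤ : Subgroup ↥Δ₀) (k - 1) = ⊥ :=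
  stmt2_general Γ k hk h
end

section
/- Fix a positive integer k and a real number ε > 0. Let w_k = [x_1, …, x_k] be the left-normed commutator word. Let G be a finite group and suppose that for some g ∈ G we have P_{G,w_k}(g) ≥ ε. Set n = ⌊k/ε⌋ and let N = G(S_n) be the intersection of the kernels of all homomorphisms from G to the symmetric group S_n. Then N is nilpotent of class less than k, i.e., γ_k(N) = 1. -/
/-!
Induction on `k`. Put `N = G(S_n)` and `C = C_G(N)`. If the conjugacy class of `u` has at most
`n` elements, `G` acts on it through `S_n`, so `N` centralizes `u`; otherwise the equation
`[u, t] = g` has at most `|G| / (n + 1)` solutions `t`, since they form a coset of `C_G(u)`.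
Splitting `w_{k+1} = [w_k, x_{k+1}]` accordingly gives
`P_{G,w_{k+1}}(g) ≤ P_{G/C,w_k}(1) + 1/(n + 1)`. The image of `N` in `G/C` lies in `(G/C)(S_n)`,
so the induction hypothesis for `G/C` and `ε - 1/(n + 1)` gives `γ_k(N) ≤ C`, whence
`γ_{k+1}(N) = [γ_k(N), N] = 1`. The induction runs on the condition `k < ε (n + 1)`, which
`n = ⌊k/ε⌋` provides and which passes from `(k + 1, ε)` to `(k, ε - 1/(n + 1))`. For `k = 1`,
`ε ≤ 1/|G|` forces `|G| ≤ n`, and Cayley's embedding `G ↪ S_n` shows `N = 1`.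
-/

open scoped Classical

lemma lift_commWord {G : Type*} [Group G] :
    ∀ {k : ℕ} (f : Fin k → G), FreeGroup.lift f (commWord k) = commElt f
  | 0, _ => by simp [commWord, commElt]
  | 1, _ => by simp [commWord, commElt]
  | k + 2, f => by
      have hmap : (FreeGroup.lift f).comp (FreeGroup.map Fin.castSucc) =
          FreeGroup.lift (Fin.init f) := FreeGroup.ext_hom _ _ fun _ => by simp [Fin.init]
      simp only [commWord, commElt, pcomm, map_mul, map_inv, FreeGroup.lift_apply_of,
        ← MonoidHom.comp_apply, hmap, lift_commWord (Fin.init f)]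
      rfl

lemma FreeGroup.lift_comp_apply {α G Q : Type*} [Group G] [Group Q] (φ : G →* Q) (x : α → G)
    (w : FreeGroup α) : FreeGroup.lift (φ ∘ x) w = φ (FreeGroup.lift x w) :=
  (FreeGroup.lift_unique (φ.comp (FreeGroup.lift x)) fun _ => by simp).symm

lemma MonoidHom.card_preimage_mul_card_eq {G M : Type*} [Group G] [Group M] [Fintype G]
    [Fintype M] (f : G →* M) (hf : Function.Surjective f) (p : M → Prop) :
    Nat.card {g // p (f g)} * Nat.card M = Nat.card {y // p y} * Nat.card G := by
  have hfiber : ∀ q : M → Prop, Nat.card {g // q (f g)} =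
      Nat.card {y // q y} * Finset.card {g | f g = 1} := by
    intro q
    simp only [Nat.card_eq_fintype_card, Fintype.card_subtype]
    rw [Finset.card_eq_sum_card_fiberwise (f := f) (t := {y | q y})
      fun g hg => by simpa using hg]
    refine Finset.sum_const_nat fun y hy => ?_
    rw [Finset.filter_filter, MonoidHom.card_fiber_eq_of_mem_range f (hf 1) (hf y)]
    congr 1
    ext g
    simp only [Finset.mem_filter, Finset.mem_univ, true_and, and_iff_right_iff_imp]
    rintro rfl
    simpa using hy
  have hall := hfiber fun _ => True
  simp only [Nat.card_congr (Equiv.subtypeUnivEquiv fun _ => trivial)] at hall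
  rw [hfiber, hall]
  ring

lemma wordProb_eq_card_div {k : ℕ} {G Q : Type*} [Group G] [Group Q] [Finite G]
    (φ : G →* Q) (hφ : Function.Surjective φ) (w : FreeGroup (Fin k)) (q : Q) :
    wordProb w q =
      Nat.card {x : Fin k → G // φ (FreeGroup.lift x w) = q} / (Nat.card G : ℝ) ^ k := by
  have := Fintype.ofFinite G
  have := Fintype.ofSurjective φ hφ
  have hcount : Nat.card {x : Fin k → G // FreeGroup.lift (φ ∘ x) w = q} * Nat.card (Fin k → Q) =
      Nat.card {y : Fin k → Q // FreeGroup.lift y w = q} * Nat.card (Fin k → G) :=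
    (φ.compLeft (Fin k)).card_preimage_mul_card_eq hφ.comp_left fun y => FreeGroup.lift y w = q
  simp only [FreeGroup.lift_comp_apply, Nat.card_fun,
    Nat.card_eq_fintype_card (α := Fin k), Fintype.card_fin] at hcount
  have hG : (0 : ℝ) < Nat.card G := by exact_mod_cast Nat.card_pos
  have hQ : (0 : ℝ) < Nat.card Q := by exact_mod_cast Nat.card_pos
  rw [wordProb, div_eq_div_iff (by positivity) (by positivity)]
  exact_mod_cast hcount.symm

lemma kerInt_le_comap {G G' H : Type*} [Group G] [Group G'] [Group H] (φ : G →* G') :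
    kerInt G H ≤ (kerInt G' H).comap φ := fun _ ha =>
  Subgroup.mem_iInf.mpr fun ψ => (Subgroup.mem_iInf.mp ha (ψ.comp φ) : _)

instance kerInt_normal {G H : Type*} [Group G] [Group H] : (kerInt G H).Normal :=
  Subgroup.normal_iInf_normal fun φ => φ.normal_ker

lemma smul_eq_of_mem_kerInt_perm {G X : Type*} [Group G] [MulAction G X] [Finite X] {x : X}
    {n : ℕ} (hx : Nat.card (MulAction.orbit G x) ≤ n) {a : G}
    (ha : a ∈ kerInt G (Equiv.Perm (Fin n))) : a • x = x := by
  let e : MulAction.orbit G x ↪ Fin n := (Finite.equivFin _).toEmbedding.trans (Fin.castLEEmb hx)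
  have hρ : MulAction.toPermHom G (MulAction.orbit G x) a = 1 :=
    Equiv.Perm.viaEmbeddingHom_injective e <| by
      simpa using (Subgroup.mem_iInf.mp ha ((Equiv.Perm.viaEmbeddingHom e).comp
        (MulAction.toPermHom G (MulAction.orbit G x))) : _)
  exact congrArg Subtype.val (Equiv.Perm.ext_iff.mp hρ ⟨x, MulAction.mem_orbit_self x⟩)

lemma kerInt_perm_eq_bot_of_card_le {G : Type*} [Group G] [Finite G] {n : ℕ}
    (hG : Nat.card G ≤ n) : kerInt G (Equiv.Perm (Fin n)) = ⊥ := by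
  refine (Subgroup.eq_bot_iff_forall _).mpr fun a ha => ?_
  have horbit : Nat.card (MulAction.orbit G (1 : G)) ≤ n := by
    rwa [MulAction.orbit_eq_univ, Nat.card_univ]
  simpa using smul_eq_of_mem_kerInt_perm horbit ha

lemma mem_centralizer_kerInt_perm {G : Type*} [Group G] [Finite G] {n : ℕ} {u : G}
    (hu : Nat.card (MulAction.orbit (ConjAct G) u) ≤ n) :
    u ∈ Subgroup.centralizer (kerInt G (Equiv.Perm (Fin n))) := by
  refine Subgroup.mem_centralizer_iff.mpr fun a ha => ?_
  have hconj : ConjAct.toConjAct a • u = u :=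
    smul_eq_of_mem_kerInt_perm hu (kerInt_le_comap ConjAct.toConjAct.toMonoidHom ha)
  rw [ConjAct.toConjAct_smul] at hconj
  exact mul_inv_eq_iff_eq_mul.mp hconj

lemma card_pcomm_eq_le_card_stabilizer {G : Type*} [Group G] [Finite G] (u g : G) :
    Nat.card {t : G // pcomm u t = g} ≤ Nat.card (MulAction.stabilizer (ConjAct G) u) := by
  rcases isEmpty_or_nonempty {t : G // pcomm u t = g} with hempty | ⟨t₀, ht₀⟩
  · simp
  have hstab : ∀ t : {t : G // pcomm u t = g},
      ConjAct.toConjAct (t₀ * (t : G)⁻¹) ∈ MulAction.stabilizer (ConjAct G) u := by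
    rintro ⟨t, ht⟩
    have hconj : t⁻¹ * u * t = t₀⁻¹ * u * t₀ := by
      have := congrArg (u * ·) (ht.trans ht₀.symm)
      simpa only [pcomm, mul_assoc, mul_inv_cancel_left] using this
    rw [MulAction.mem_stabilizer_iff, ConjAct.toConjAct_smul]
    calc t₀ * t⁻¹ * u * (t₀ * t⁻¹)⁻¹ = t₀ * (t⁻¹ * u * t) * t₀⁻¹ := by group
      _ = u := by rw [hconj]; group
  have := Finite.of_equiv G ConjAct.toConjAct.toEquiv
  refine Nat.card_le_card_of_injective (fun t => ⟨_, hstab t⟩) fun t s hts => ?_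
  have := ConjAct.toConjAct.injective (congrArg Subtype.val hts)
  exact Subtype.ext (inv_injective (mul_left_cancel this))

lemma card_pcomm_eq_mul_card_orbit_le {G : Type*} [Group G] [Finite G] (u g : G) :
    Nat.card {t : G // pcomm u t = g} * Nat.card (MulAction.orbit (ConjAct G) u) ≤
      Nat.card G := by
  calc Nat.card {t : G // pcomm u t = g} * Nat.card (MulAction.orbit (ConjAct G) u)
      ≤ Nat.card (MulAction.stabilizer (ConjAct G) u) *
          (MulAction.stabilizer (ConjAct G) u).index := by
        rw [MulAction.index_stabilizer, Nat.card_coe_set_eq]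
        exact Nat.mul_le_mul_right _ (card_pcomm_eq_le_card_stabilizer u g)
    _ = Nat.card G := by
        rw [Subgroup.card_mul_index]
        exact Nat.card_congr ConjAct.ofConjAct.toEquiv

lemma card_commElt_eq_sum {G : Type*} [Group G] [Fintype G] (m : ℕ) (g : G) :
    Nat.card {f : Fin (m + 2) → G // commElt f = g} =
      ∑ x : Fin (m + 1) → G, Nat.card {t : G // pcomm (commElt x) t = g} := by
  rw [← Nat.card_sigma]
  exact Nat.card_congr <|
    (((Fin.snocEquiv fun _ => G).symm.trans (Equiv.prodComm _ _)).subtypeEquiv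
      fun _ => Iff.rfl).trans (Equiv.subtypeProdEquivSigmaSubtype fun x t => pcomm (commElt x) t = g)

lemma card_pcomm_eq_le_of_notMem_centralizer {G : Type*} [Group G] [Finite G] {n : ℕ}
    {u : G} (hu : u ∉ Subgroup.centralizer (kerInt G (Equiv.Perm (Fin n)))) (g : G) :
    (Nat.card {t : G // pcomm u t = g} : ℝ) ≤ Nat.card G / (n + 1) := by
  have horbit : n + 1 ≤ Nat.card (MulAction.orbit (ConjAct G) u) :=
    not_le.mp (mt mem_centralizer_kerInt_perm hu)
  rw [le_div_iff₀ (by positivity)]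
  exact_mod_cast (Nat.mul_le_mul_left _ horbit).trans (card_pcomm_eq_mul_card_orbit_le u g)

lemma wordProb_commWord_succ_le {G : Type*} [Group G] [Fintype G] (m n : ℕ) (g : G) :
    wordProb (commWord (m + 2)) g ≤
      wordProb (commWord (m + 1))
        (1 : G ⧸ Subgroup.centralizer (kerInt G (Equiv.Perm (Fin n)) : Set G)) + 1 / (n + 1) := by
  set C := Subgroup.centralizer (kerInt G (Equiv.Perm (Fin n)) : Set G)
  rw [wordProb_eq_card_div (QuotientGroup.mk' C) (QuotientGroup.mk'_surjective C)]
  simp only [wordProb, lift_commWord, QuotientGroup.mk'_apply, QuotientGroup.eq_one_iff,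
    card_commElt_eq_sum, Nat.card_eq_fintype_card (α := {x : Fin (m + 1) → G // _}),
    Fintype.card_subtype]
  have hfiber : ∀ x : Fin (m + 1) → G, (Nat.card {t : G // pcomm (commElt x) t = g} : ℝ) ≤
      (if commElt x ∈ C then (Nat.card G : ℝ) else 0) + Nat.card G / (n + 1) := by
    intro x
    split_ifs with hx
    · have : (Nat.card {t : G // pcomm (commElt x) t = g} : ℝ) ≤ Nat.card G := by
        exact_mod_cast Nat.card_le_card_of_injective _ Subtype.val_injective
      have : (0 : ℝ) ≤ Nat.card G / (n + 1) := by positivity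
      linarith
    · simpa using card_pcomm_eq_le_of_notMem_centralizer hx g
  have hsum := Finset.sum_le_sum fun x (_ : x ∈ Finset.univ) => hfiber x
  rw [Finset.sum_add_distrib, ← Finset.sum_filter, Finset.sum_const, Finset.sum_const,
    Finset.card_univ, Fintype.card_fun, Fintype.card_fin, ← Nat.card_eq_fintype_card] at hsum
  have hG : (0 : ℝ) < Nat.card G := by exact_mod_cast Nat.card_pos
  rw [div_le_iff₀ (by positivity)]
  push_cast
  calc _ ≤ _ := hsum
    _ = _ := by simp only [nsmul_eq_mul]; push_cast; field_simp; ring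

lemma Subgroup.lowerCentralSeries_succ_eq_bot_of_map_le {G Q : Type*} [Group G] [Group Q]
    {S : Subgroup G} {T : Subgroup Q} {n : ℕ} (φ : G →* Q)
    (hker : φ.ker ≤ centralizer (S : Set G)) (hmap : S.map φ ≤ T)
    (hT : T.lowerCentralSeries n = ⊥) : S.lowerCentralSeries (n + 1) = ⊥ := by
  have hle : S.lowerCentralSeries n ≤ φ.ker := by
    rw [← map_eq_bot_iff, eq_bot_iff, map_lowerCentralSeries, ← hT]
    exact lowerCentralSeries_mono n hmap
  rw [lowerCentralSeries_succ, commutator_eq_bot_iff_le_centralizer]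
  exact hle.trans hker

lemma wordProb_commWord_one {G : Type*} [Group G] [Finite G] (g : G) :
    wordProb (commWord 1) g = 1 / Nat.card G := by
  have : Nat.card {f : Fin 1 → G // f 0 = g} = 1 :=
    (Nat.card_congr ((Equiv.funUnique (Fin 1) G).subtypeEquiv (p := fun f => f 0 = g)
      (q := fun a => a = g) fun _ => Iff.rfl)).trans Nat.card_unique
  simp [wordProb, lift_commWord, commElt, this]

theorem lowerCentralSeries_kerInt_perm_eq_bot (m : ℕ) {G : Type*} [Group G] [Finite G] {ε : ℝ}
    {g : G} (h : ε ≤ wordProb (commWord (m + 1)) g) {n : ℕ} (hn : (m + 1 : ℝ) < ε * (n + 1)) :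
    (kerInt G (Equiv.Perm (Fin n))).lowerCentralSeries m = ⊥ := by
  induction m generalizing G ε g with
  | zero =>
    have hG : (0 : ℝ) < Nat.card G := by exact_mod_cast Nat.card_pos
    rw [wordProb_commWord_one, le_div_iff₀ hG] at h
    have hcard : Nat.card G ≤ n := by
      have : (Nat.card G : ℝ) < n + 1 := by nlinarith
      exact Nat.lt_add_one_iff.mp (by exact_mod_cast this)
    simpa using kerInt_perm_eq_bot_of_card_le hcard
  | succ m ih =>
    have := Fintype.ofFinite G
    set C := Subgroup.centralizer (kerInt G (Equiv.Perm (Fin n)) : Set G)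
    refine (kerInt G _).lowerCentralSeries_succ_eq_bot_of_map_le (QuotientGroup.mk' C)
      (QuotientGroup.ker_mk' C).le (Subgroup.map_le_iff_le_comap.mpr (kerInt_le_comap _))
      (ih (G := G ⧸ C) (ε := ε - 1 / (n + 1)) (g := 1) ?_ ?_)
    · linarith [wordProb_commWord_succ_le m n g]
    · have : (0 : ℝ) < n + 1 := by positivity
      rw [sub_mul, one_div_mul_cancel this.ne']
      push_cast at hn
      linarith

/-- If a finite group `G` satisfies `P_{G,w_k}(g) ≥ ε` for some `g`,
then `N = G(S_n)` with `n = ⌊k/ε⌋` is nilpotent of class less than `k`. -/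
theorem stmt3 (k : ℕ) (hk : 1 ≤ k) (ε : ℝ) (hε : 0 < ε)
    (G : Type*) [Group G] [Finite G] (g : G) (h : ε ≤ wordProb (commWord k) g)
    (n : ℕ) (hn : n = Nat.floor ((k : ℝ) / ε)) :
    Subgroup.lowerCentralSeries (⊤ : Subgroup ↥(kerInt G (Equiv.Perm (Fin n)))) (k - 1) = ⊥ := by
  obtain ⟨m, rfl⟩ : ∃ m, k = m + 1 := ⟨k - 1, by omega⟩
  have hbound : ((m + 1 : ℕ) : ℝ) < ε * (n + 1) := by
    rw [hn, ← div_lt_iff₀' hε]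
    exact Nat.lt_floor_add_one _
  rw [Nat.add_sub_cancel, ← Subgroup.map_subtype_inj, Subgroup.map_bot,
    Subgroup.top_subtype_lowerCentralSeries]
  exact lowerCentralSeries_kerInt_perm_eq_bot m h (by exact_mod_cast hbound)
end
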